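/- The function x ↦ f(dist(x, E)) is integrable with respect to Lebesgue measure on the closed unit ball of ℝ^d. -/

import Mathlib

open MeasureTheory Metric Set Filter
open scoped Topology

section Aux

lemma aux_integrable_volumeIoiPow {g : ℝ → ℝ} {n : ℕ}
    (h : IntegrableOn (fun y => g y * y ^ n) (Ioi (0:ℝ)) volume) :
    Integrable (fun y : Ioi (0:ℝ) => g y) (Measure.volumeIoiPow n) := by
  rw [Measure.volumeIoiPow, integrable_withDensity_iff
      ((measurable_subtype_coe.pow_const n).ennreal_ofReal)
      (ae_of_all _ fun x => ENNReal.ofReal_lt_top)]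
  have h1 : Integrable ((fun y : ℝ => g y * y ^ n) ∘ (Subtype.val : Ioi (0:ℝ) → ℝ))
      (Measure.comap Subtype.val volume) := by
    refine ((MeasurableEmbedding.subtype_coe measurableSet_Ioi).integrable_map_iff).mp ?_
    rwa [map_comap_subtype_coe measurableSet_Ioi]
  refine h1.congr (ae_of_all _ fun y => ?_)
  simp [Function.comp, ENNReal.toReal_ofReal (pow_nonneg (le_of_lt y.2) n)]

lemma aux_integrable_norm_comp {E : Type*} [NormedAddCommGroup E] [NormedSpace ℝ E]
    [MeasurableSpace E] [BorelSpace E] [FiniteDimensional ℝ E] [Nontrivial E]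
    (μ : Measure E) [μ.IsAddHaarMeasure] {g : ℝ → ℝ}
    (h : IntegrableOn (fun y => g y * y ^ (Module.finrank ℝ E - 1)) (Ioi (0:ℝ)) volume) :
    Integrable (fun x => g ‖x‖) μ := by
  set n := Module.finrank ℝ E - 1 with hn
  have hsub : Integrable (fun y : Ioi (0:ℝ) => g y) (Measure.volumeIoiPow n) :=
    aux_integrable_volumeIoiPow h
  set ν := Measure.volumeIoiPow n with hν
  have hmap : Measure.map Prod.snd (μ.toSphere.prod ν) = μ.toSphere Set.univ • ν := by
    ext s hs
    have hpre : (Prod.snd : sphere (0:E) 1 × Ioi (0:ℝ) → Ioi (0:ℝ)) ⁻¹' s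
        = (Set.univ ×ˢ s) := by ext p; simp
    rw [Measure.map_apply measurable_snd hs, hpre, Measure.prod_prod, Measure.smul_apply,
      smul_eq_mul]
  have h3 : Integrable (fun y : Ioi (0:ℝ) => g y)
      (Measure.map Prod.snd (μ.toSphere.prod ν)) := by
    rw [hmap]
    exact hsub.smul_measure (measure_ne_top _ _)
  have hP : Integrable (fun p : sphere (0:E) 1 × Ioi (0:ℝ) => g p.2) (μ.toSphere.prod ν) := by
    simpa [Function.comp_def] using
      (integrable_map_measure h3.aestronglyMeasurable measurable_snd.aemeasurable).mp h3
  have h4 : Integrable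
      ((fun p : sphere (0:E) 1 × Ioi (0:ℝ) => g p.2) ∘ (homeomorphUnitSphereProd E))
      (Measure.comap Subtype.val μ) :=
    ((μ.measurePreserving_homeomorphUnitSphereProd).integrable_comp_emb
      (Homeomorph.measurableEmbedding _)).mpr hP
  have h5 : Integrable ((fun x : E => g ‖x‖) ∘ (Subtype.val : ({0}ᶜ : Set E) → E))
      (Measure.comap Subtype.val μ) := by
    refine h4.congr (ae_of_all _ fun x => ?_)
    simp [Function.comp]
  have h6 : IntegrableOn (fun x : E => g ‖x‖) ({0}ᶜ) μ := by
    rw [IntegrableOn, ← map_comap_subtype_coe (measurableSet_singleton (0:E)).compl]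
    exact ((MeasurableEmbedding.subtype_coe (measurableSet_singleton (0:E)).compl
      ).integrable_map_iff).mpr h5
  rwa [IntegrableOn, restrict_compl_singleton] at h6

lemma aux_infDist_pair {X : Type*} [MetricSpace X] (x a b : X) :
    infDist x ({a, b} : Set X) = min (dist x a) (dist x b) := by
  apply le_antisymm
  · exact le_min (infDist_le_dist_of_mem (by simp)) (infDist_le_dist_of_mem (by simp))
  · by_contra hcon
    push_neg at hcon
    obtain ⟨y, hy, hlt⟩ := (infDist_lt_iff ⟨a, by simp⟩).mp hcon
    rcases hy with rfl | rfl
    · exact ((min_le_left _ _).trans_lt hlt).false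
    · exact ((min_le_right _ _).trans_lt hlt).false

lemma aux_deriv {x : ℝ} (hx : 0 < x) (hlog : Real.log x ≠ 0) :
    HasDerivAt (fun y => -(Real.log y)⁻¹) ((x * (Real.log x)^2)⁻¹) x := by
  have h1 : HasDerivAt Real.log x⁻¹ x := Real.hasDerivAt_log hx.ne'
  have h2 := (h1.inv hlog).neg
  have h3 : HasDerivAt (fun y => -(Real.log y)⁻¹) (-(-x⁻¹ / Real.log x ^ 2)) x := h2
  convert h3 using 1
  rw [mul_inv]
  field_simp

lemma aux_int_zero : IntegrableOn (fun y => (y * (Real.log y)^2)⁻¹)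
    (Ioc (0:ℝ) (Real.exp (-1))) volume := by
  have hlt1 : Real.exp (-1) < 1 := Real.exp_lt_one_iff.mpr (by norm_num)
  refine intervalIntegral.integrableOn_deriv_of_nonneg (g := fun y => -(Real.log y)⁻¹) ?_ ?_ ?_
  · intro x hx
    rcases eq_or_lt_of_le hx.1 with heq | hpos
    · subst heq
      have htend : Tendsto (fun y => -(Real.log y)⁻¹) (𝓝[>] (0:ℝ)) (𝓝 0) := by
        have h1 : Tendsto (fun y => -Real.log y) (𝓝[>] (0:ℝ)) atTop :=
          tendsto_neg_atBot_atTop.comp Real.tendsto_log_nhdsGT_zero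
        have h2 := h1.inv_tendsto_atTop
        refine h2.congr fun y => ?_
        simp [Pi.inv_apply, inv_neg]
      have hcw : ContinuousWithinAt (fun y => -(Real.log y)⁻¹) (Ioi (0:ℝ)) 0 := by
        rw [ContinuousWithinAt]
        simpa [Real.log_zero] using htend
      exact (((continuousWithinAt_Ioi_iff_Ici).mp hcw).mono Icc_subset_Ici_self)
    · have hlog : Real.log x ≠ 0 :=
        ne_of_lt (Real.log_neg hpos (lt_of_le_of_lt hx.2 hlt1))
      exact (((Real.continuousAt_log hpos.ne').inv₀ hlog).neg).continuousWithinAt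
  · intro x hx
    have hlog : Real.log x ≠ 0 := ne_of_lt (Real.log_neg hx.1 (hx.2.trans hlt1))
    exact aux_deriv hx.1 hlog
  · intro x hx
    exact inv_nonneg.2 (mul_nonneg hx.1.le (sq_nonneg _))

lemma aux_int_top : IntegrableOn (fun y => (y * (Real.log y)^2)⁻¹)
    (Ioi (Real.exp 1)) volume := by
  have h1e : (1:ℝ) < Real.exp 1 := by
    have := Real.add_one_le_exp (1:ℝ)
    linarith
  refine integrableOn_Ioi_deriv_of_nonneg (g := fun y => -(Real.log y)⁻¹)
      (l := 0) ?_ ?_ ?_ ?_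
  · have hlog : Real.log (Real.exp 1) ≠ 0 := by
      rw [Real.log_exp]; norm_num
    exact (((Real.continuousAt_log (Real.exp_pos 1).ne').inv₀ hlog).neg).continuousWithinAt
  · intro x hx
    have hx1 : (1:ℝ) < x := h1e.trans hx
    have hlog : Real.log x ≠ 0 := ne_of_gt (Real.log_pos hx1)
    exact aux_deriv (by linarith) hlog
  · intro x hx
    have hx0 : (0:ℝ) < x := (Real.exp_pos 1).trans hx
    exact inv_nonneg.2 (mul_nonneg hx0.le (sq_nonneg _))
  · have h2 := Real.tendsto_log_atTop.inv_tendsto_atTop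
    have h3 : Tendsto (fun y : ℝ => -(Real.log y)⁻¹) atTop (𝓝 (-0)) := h2.neg
    simpa using h3

end Aux

/-- The function `x ↦ f(dist(x, E))`, with `f r = r^{-d} * min 1 (log r)^{-2}` and
`E = {(1,0,…,0), (-1,0,…,0)}`, is integrable with respect to Lebesgue measure on the
closed unit ball of `ℝ^d`. -/
theorem stmt0 (d : ℕ) (hd : 2 ≤ d)
    (A A' : EuclideanSpace ℝ (Fin d))
    (hA : A = EuclideanSpace.single (⟨0, by omega⟩ : Fin d) (1 : ℝ))
    (hA' : A' = EuclideanSpace.single (⟨0, by omega⟩ : Fin d) (-1 : ℝ))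
    (E : Set (EuclideanSpace ℝ (Fin d))) (hE : E = {A, A'})
    (f : ℝ → ℝ)
    (hf : ∀ r : ℝ, 0 < r → f r = r ^ (-(d : ℝ)) * min 1 ((Real.log r) ^ 2)⁻¹) :
    IntegrableOn (fun x => f (infDist x E)) (closedBall 0 1) volume := by
  haveI : Nonempty (Fin d) := ⟨⟨0, by omega⟩⟩
  haveI : Nontrivial (EuclideanSpace ℝ (Fin d)) := inferInstance
  set φ : ℝ → ℝ := fun r => r ^ (-(d : ℝ)) * min 1 ((Real.log r) ^ 2)⁻¹ with hφ
  have hφm : Measurable φ := by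
    simp only [hφ]
    measurability
  have hmin_nonneg : ∀ y : ℝ, 0 ≤ min 1 ((Real.log y)^2)⁻¹ :=
    fun y => le_min (by norm_num) (by positivity)
  have hφnonneg : ∀ r : ℝ, 0 ≤ r → 0 ≤ φ r := fun r hr =>
    mul_nonneg (Real.rpow_nonneg hr _) (hmin_nonneg r)
  -- pointwise formula for the radial integrand
  have hJeq : ∀ y : ℝ, 0 < y →
      φ y * y ^ (d-1) = y⁻¹ * min 1 ((Real.log y)^2)⁻¹ := by
    intro y hy0
    have h1 : y ^ (-(d:ℝ)) = (y ^ (d:ℕ))⁻¹ := by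
      rw [← Real.rpow_natCast y d, ← Real.rpow_neg hy0.le]
    have h2 : (y:ℝ) ^ (d:ℕ) = y ^ (d-1) * y := by
      rw [← pow_succ]
      congr 1
      omega
    have h3 : (y:ℝ) ^ (d-1) ≠ 0 := pow_ne_zero _ hy0.ne'
    simp only [hφ]
    rw [h1, h2, mul_inv]
    calc ((y ^ (d-1))⁻¹ * y⁻¹ * min 1 ((Real.log y)^2)⁻¹) * y ^ (d-1)
        = ((y ^ (d-1))⁻¹ * y ^ (d-1)) * (y⁻¹ * min 1 ((Real.log y)^2)⁻¹) := by ring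
      _ = y⁻¹ * min 1 ((Real.log y)^2)⁻¹ := by rw [inv_mul_cancel₀ h3, one_mul]
  have hJm : Measurable fun y : ℝ => φ y * y ^ (d-1) :=
    hφm.mul (measurable_id.pow_const _)
  -- 1D integrability
  have h1d : IntegrableOn (fun y : ℝ => φ y * y ^ (d - 1)) (Ioi (0:ℝ)) volume := by
    have hlow : IntegrableOn (fun y : ℝ => φ y * y ^ (d - 1))
        (Ioc (0:ℝ) (Real.exp (-1))) volume := by
      refine Integrable.mono' aux_int_zero (hJm.aestronglyMeasurable.restrict) ?_
      rw [ae_restrict_iff' measurableSet_Ioc]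
      refine ae_of_all _ fun y hy => ?_
      rw [hJeq y hy.1, Real.norm_of_nonneg
        (mul_nonneg (inv_nonneg.2 hy.1.le) (hmin_nonneg y)), mul_inv]
      exact mul_le_mul_of_nonneg_left (min_le_right _ _) (inv_nonneg.2 hy.1.le)
    have hmid : IntegrableOn (fun y : ℝ => φ y * y ^ (d - 1))
        (Ioc (Real.exp (-1)) (Real.exp 1)) volume := by
      have hconst : IntegrableOn (fun _ : ℝ => Real.exp 1)
          (Ioc (Real.exp (-1)) (Real.exp 1)) volume :=
        (integrableOn_const_iff).mpr (Or.inr measure_Ioc_lt_top)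
      refine Integrable.mono' hconst (hJm.aestronglyMeasurable.restrict) ?_
      rw [ae_restrict_iff' measurableSet_Ioc]
      refine ae_of_all _ fun y hy => ?_
      have hy0 : (0:ℝ) < y := (Real.exp_pos _).trans hy.1
      rw [hJeq y hy0, Real.norm_of_nonneg
        (mul_nonneg (inv_nonneg.2 hy0.le) (hmin_nonneg y))]
      calc y⁻¹ * min 1 ((Real.log y)^2)⁻¹ ≤ y⁻¹ * 1 :=
            mul_le_mul_of_nonneg_left (min_le_left _ _) (inv_nonneg.2 hy0.le)
        _ = y⁻¹ := mul_one _
        _ ≤ (Real.exp (-1))⁻¹ := by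
            apply inv_anti₀ (Real.exp_pos _) hy.1.le
        _ = Real.exp 1 := by rw [Real.exp_neg, inv_inv]
    have hhigh : IntegrableOn (fun y : ℝ => φ y * y ^ (d - 1))
        (Ioi (Real.exp 1)) volume := by
      refine Integrable.mono' aux_int_top (hJm.aestronglyMeasurable.restrict) ?_
      rw [ae_restrict_iff' measurableSet_Ioi]
      refine ae_of_all _ fun y hy => ?_
      have hy0 : (0:ℝ) < y := (Real.exp_pos _).trans hy
      rw [hJeq y hy0, Real.norm_of_nonneg
        (mul_nonneg (inv_nonneg.2 hy0.le) (hmin_nonneg y)), mul_inv]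
      exact mul_le_mul_of_nonneg_left (min_le_right _ _) (inv_nonneg.2 hy0.le)
    have hsubset : Ioi (0:ℝ) ⊆
        (Ioc (0:ℝ) (Real.exp (-1)) ∪ Ioc (Real.exp (-1)) (Real.exp 1)) ∪
          Ioi (Real.exp 1) := by
      intro y hy
      rcases le_or_gt y (Real.exp (-1)) with h | h
      · exact Or.inl (Or.inl ⟨hy, h⟩)
      rcases le_or_gt y (Real.exp 1) with h2 | h2
      · exact Or.inl (Or.inr ⟨h, h2⟩)
      · exact Or.inr h2
    exact ((hlow.union hmid).union hhigh).mono_set hsubset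
  -- integrability of φ ∘ norm and translates
  have hg : Integrable (fun x : EuclideanSpace ℝ (Fin d) => φ ‖x‖) volume := by
    apply aux_integrable_norm_comp
    simpa [finrank_euclideanSpace_fin] using h1d
  have hgA : Integrable (fun x : EuclideanSpace ℝ (Fin d) => φ (dist x A)) volume := by
    simpa [dist_eq_norm] using hg.comp_sub_right A
  have hgA' : Integrable (fun x : EuclideanSpace ℝ (Fin d) => φ (dist x A')) volume := by
    simpa [dist_eq_norm] using hg.comp_sub_right A'
  have hE0 : volume E = 0 := by
    rw [hE]
    exact ((Set.finite_singleton A').insert A).measure_zero _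
  have hae : ∀ᵐ x : EuclideanSpace ℝ (Fin d), x ∉ E := by
    rw [ae_iff]
    simpa using hE0
  have key : ∀ x : EuclideanSpace ℝ (Fin d), x ∉ E →
      f (infDist x E) = φ (infDist x E) ∧
      (infDist x E = dist x A ∨ infDist x E = dist x A') ∧ 0 < infDist x E := by
    intro x hx
    have hxA : x ≠ A := fun h => hx (by rw [hE, h]; simp)
    have hxA' : x ≠ A' := fun h => hx (by rw [hE, h]; simp)
    have hmin : infDist x E = min (dist x A) (dist x A') := by
      rw [hE]; exact aux_infDist_pair x A A'
    have hpos : 0 < infDist x E := by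
      rw [hmin]
      exact lt_min (dist_pos.mpr hxA) (dist_pos.mpr hxA')
    refine ⟨hf _ hpos, ?_, hpos⟩
    rw [hmin]
    rcases min_cases (dist x A) (dist x A') with ⟨h, _⟩ | ⟨h, _⟩
    · exact Or.inl h
    · exact Or.inr h
  have haesm : AEStronglyMeasurable (fun x : EuclideanSpace ℝ (Fin d) => f (infDist x E))
      volume := by
    refine ((hφm.comp (continuous_infDist_pt E).measurable).aestronglyMeasurable).congr ?_
    filter_upwards [hae] with x hx
    exact ((key x hx).1).symm
  have hInt : Integrable (fun x : EuclideanSpace ℝ (Fin d) => f (infDist x E)) volume := by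
    refine (hgA.add hgA').mono' haesm ?_
    filter_upwards [hae] with x hx
    obtain ⟨heq, hor, hpos⟩ := key x hx
    rw [heq]
    rcases hor with h | h <;> rw [h]
    · rw [Real.norm_of_nonneg (hφnonneg _ dist_nonneg)]
      exact le_add_of_nonneg_right (hφnonneg _ dist_nonneg)
    · rw [Real.norm_of_nonneg (hφnonneg _ dist_nonneg)]
      exact le_add_of_nonneg_left (hφnonneg _ dist_nonneg)
  exact hInt.integrableOn
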